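/- For every continuous function φ on ℝ with compact support, lim_{q → -1⁺} (1/Γ(q+1)) ∫₀^∞ r^q φ(r) dr = φ(0). -/

import Mathlib

open MeasureTheory Metric Filter Pointwise
set_option synthInstance.maxHeartbeats 1000000
set_option maxHeartbeats 1000000
noncomputable section

/-- ℂⁿ with its Euclidean structure (≅ ℝ²ⁿ as a real inner product space). -/
abbrev Cn (n : ℕ) := EuclideanSpace ℂ (Fin n)

instance {n : ℕ} : MeasurableSpace (Cn n) := WithLp.measurableSpace 2 (Fin n → ℂ)
instance {n : ℕ} : BorelSpace (Cn n) := PiLp.borelSpace 2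
instance {n : ℕ} : InnerProductSpace ℝ (Cn n) := InnerProductSpace.complexToReal
instance {n : ℕ} (W : Submodule ℂ (Cn n)) : InnerProductSpace ℝ W :=
  InnerProductSpace.complexToReal

/-- The complex inner product `x · u`, conjugate-linear in `u`
(so that `x · (λ u) = conj λ (x · u)`), whose real part is the real
inner product `⟨x,u⟩` on ℂⁿ ≅ ℝ²ⁿ. -/
def dotC {n : ℕ} (x u : Cn n) : ℂ := inner ℂ u x

/-- Support function of a set `C ⊆ ℂ ≅ ℝ²` at `z`:  `h_C(z) = sup_{c ∈ C} ⟨c, z⟩`. -/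
def hsC (C : Set ℂ) (z : ℂ) : ℝ := sSup ((fun c => ((starRingEnd ℂ) c * z).re) '' C)

/-- Radial function of a set. -/
def radial {E : Type*} [SMul ℝ E] (K : Set E) (x : E) : ℝ :=
  sSup {t : ℝ | 0 ≤ t ∧ t • x ∈ K}

/-- `K` is a star body: compact, star-shaped about the origin, with continuous positive
radial function. -/
def IsStarBody {n : ℕ} (K : Set (Cn n)) : Prop :=
  IsCompact K ∧ (∀ x ∈ K, ∀ t : ℝ, 0 ≤ t → t ≤ 1 → t • x ∈ K) ∧
    (Continuous fun v : sphere (0 : Cn n) 1 => radial K (v : Cn n)) ∧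
    (∀ x : Cn n, x ≠ 0 → 0 < radial K x)

/-- Spherical Lebesgue (surface) measure on the unit sphere `S^{2n-1} ⊆ ℂⁿ`. -/
def sphMeas (n : ℕ) : Measure (sphere (0 : Cn n) 1) := (volume : Measure (Cn n)).toSphere

/-- Arc-length measure on the unit circle `S¹ ⊆ ℂ`. -/
def circMeas : Measure (sphere (0 : ℂ) 1) := (volume : Measure ℂ).toSphere

/-- Dimension of a subset of ℂ (dimension of the direction of its affine span). -/
def dimC (C : Set ℂ) : ℕ := Module.finrank ℝ (affineSpan ℝ C).direction
/-! Substituting `u = r ^ (q + 1)` turns `(q + 1) ∫₀^∞ r ^ q φ(r) dr` into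
`∫₀^∞ φ(u ^ (q + 1)⁻¹) du`. As `q → -1⁺`, `u ^ (q + 1)⁻¹` tends to `0` for `u < 1` and to `∞`
for `u > 1`, so by dominated convergence this integral tends to `φ 0 · |(0, 1)| = φ 0`, while
`(q + 1) Γ(q + 1) = Γ(q + 2) → 1`. -/

open Set Real Topology

theorem integral_comp_rpow_inv_Ioi {E : Type*} [NormedAddCommGroup E] [NormedSpace ℝ E]
    (f : ℝ → E) {p : ℝ} (hp : 0 < p) :
    ∫ u in Ioi 0, f (u ^ p⁻¹) = p • ∫ r in Ioi 0, r ^ (p - 1) • f r := by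
  rw [← integral_comp_rpow_Ioi _ hp.ne', ← integral_smul]
  refine setIntegral_congr_fun measurableSet_Ioi fun r (hr : 0 < r) => ?_
  simp only [← rpow_mul hr.le, mul_inv_cancel₀ hp.ne', rpow_one, abs_of_pos hp, mul_smul]

theorem tendsto_rpow_inv_nhdsGT_zero_of_lt_one {u : ℝ} (hu₀ : 0 ≤ u) (hu₁ : u < 1) :
    Tendsto (fun p : ℝ => u ^ p⁻¹) (𝓝[>] 0) (𝓝 0) :=
  (tendsto_rpow_atTop_of_base_lt_one u (by linarith) hu₁).comp tendsto_inv_nhdsGT_zero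

theorem tendsto_rpow_inv_nhdsGT_zero_of_one_lt {u : ℝ} (hu : 1 < u) :
    Tendsto (fun p : ℝ => u ^ p⁻¹) (𝓝[>] 0) atTop :=
  (tendsto_rpow_atTop_of_base_gt_one u hu).comp tendsto_inv_nhdsGT_zero

theorem tendsto_comp_rpow_inv_nhdsGT_zero {E : Type*} [TopologicalSpace E] [Zero E] {φ : ℝ → E}
    (hφ₀ : ContinuousAt φ 0) (hφ_top : Tendsto φ atTop (𝓝 0)) {u : ℝ} (hu₀ : 0 < u) (hu₁ : u ≠ 1) :
    Tendsto (fun p : ℝ => φ (u ^ p⁻¹)) (𝓝[>] 0) (𝓝 ((Ioo 0 1).indicator (fun _ => φ 0) u)) := by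
  rcases hu₁.lt_or_gt with hu₁ | hu₁
  · rw [indicator_of_mem (show u ∈ Ioo 0 1 from ⟨hu₀, hu₁⟩)]
    exact hφ₀.tendsto.comp (tendsto_rpow_inv_nhdsGT_zero_of_lt_one hu₀.le hu₁)
  · rw [indicator_of_notMem fun h => h.2.not_gt hu₁]
    exact hφ_top.comp (tendsto_rpow_inv_nhdsGT_zero_of_one_lt hu₁)

theorem tendsto_integral_comp_rpow_inv_Ioi {E : Type*} [NormedAddCommGroup E] [NormedSpace ℝ E]
    [CompleteSpace E] {φ : ℝ → E} (hφ : Continuous φ) (hsupp : HasCompactSupport φ) :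
    Tendsto (fun p : ℝ => ∫ u in Ioi 0, φ (u ^ p⁻¹)) (𝓝[>] 0) (𝓝 (φ 0)) := by
  obtain ⟨C, hC⟩ := hφ.bounded_above_of_compact_support hsupp
  obtain ⟨R, -, hR⟩ := hsupp.exists_pos_le_norm
  have h_limit : ∫ u in Ioi (0 : ℝ), (Ioo 0 1).indicator (fun _ => φ 0) u = φ 0 := by
    simp [integral_indicator measurableSet_Ioo, Ioo_inter_Ioi]
  rw [← h_limit]
  refine tendsto_integral_filter_of_dominated_convergence ((Ioc 0 (max R 1)).indicator fun _ => C)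
    ?_ ?_ ?_ ?_
  · exact Eventually.of_forall fun p =>
      hφ.comp_aestronglyMeasurable (measurable_id.pow_const p⁻¹).aestronglyMeasurable
  · filter_upwards [Ioc_mem_nhdsGT (zero_lt_one' ℝ)] with p ⟨hp₀, hp₁⟩
    filter_upwards [ae_restrict_mem measurableSet_Ioi] with u (hu : 0 < u)
    by_cases huR : u ≤ max R 1
    · simpa [indicator_of_mem (show u ∈ Ioc 0 (max R 1) from ⟨hu, huR⟩)] using hC _
    · have hu₁ : 1 ≤ u := (le_max_right R 1).trans (not_le.1 huR).le
      have h_far : R ≤ ‖u ^ p⁻¹‖ := calc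
        R ≤ u := (le_max_left R 1).trans (not_le.1 huR).le
        _ ≤ u ^ p⁻¹ := self_le_rpow_of_one_le hu₁ (one_le_inv₀ hp₀ |>.2 hp₁)
        _ ≤ ‖u ^ p⁻¹‖ := le_abs_self _
      simp [hR _ h_far, indicator_of_notMem (show u ∉ Ioc 0 (max R 1) from fun h => huR h.2)]
  · exact (integrableOn_const measure_Ioc_lt_top.ne).integrable_indicator measurableSet_Ioc
  · filter_upwards [ae_restrict_mem measurableSet_Ioi,
      ae_restrict_of_ae (compl_mem_ae_iff.2 (measure_singleton (1 : ℝ)))]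
      with u (hu₀ : 0 < u) (hu₁ : u ≠ 1)
    exact tendsto_comp_rpow_inv_nhdsGT_zero hφ.continuousAt
      (hsupp.is_zero_at_infty.mono_left atTop_le_cocompact) hu₀ hu₁

theorem tendsto_inv_Gamma_add_one_nhds_zero :
    Tendsto (fun p : ℝ => (Gamma (p + 1))⁻¹) (𝓝 0) (𝓝 1) := by
  have hΓ₁ : ContinuousAt Gamma 1 :=
    (differentiableAt_Gamma fun m => by linarith [(m.cast_nonneg : (0 : ℝ) ≤ m)]).continuousAt
  have h_shift : Tendsto (fun p : ℝ => p + 1) (𝓝 0) (𝓝 1) := by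
    simpa using (continuous_add_const (1 : ℝ)).tendsto 0
  simpa using (hΓ₁.tendsto.comp h_shift).inv₀ (by simp)

/-- lim_{q → -1⁺} (1/Γ(q+1)) ∫₀^∞ r^q φ(r) dr = φ(0). -/
theorem tendsto_gamma_normalized_power_integral (φ : ℝ → ℝ)
    (hφ : Continuous φ) (hsupp : HasCompactSupport φ) :
    Tendsto (fun q : ℝ => (Real.Gamma (q + 1))⁻¹ * ∫ r in Set.Ioi (0 : ℝ), r ^ q * φ r)
      (nhdsWithin (-1) (Set.Ioi (-1))) (nhds (φ 0)) := by
  have h_shift : Tendsto (fun q : ℝ => q + 1) (𝓝[>] (-1)) (𝓝[>] 0) :=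
    tendsto_nhdsWithin_iff.2 ⟨((continuous_add_const 1).tendsto' _ _ (by norm_num)).mono_left
      nhdsWithin_le_nhds, eventually_nhdsWithin_of_forall fun q (hq : -1 < q) => by
        simp only [mem_Ioi]; linarith⟩
  have h_lim := ((tendsto_inv_Gamma_add_one_nhds_zero.mono_left nhdsWithin_le_nhds).mul
    (tendsto_integral_comp_rpow_inv_Ioi hφ hsupp)).comp h_shift
  rw [one_mul] at h_lim
  refine h_lim.congr' ?_
  filter_upwards [self_mem_nhdsWithin] with q (hq : -1 < q)
  have hp : 0 < q + 1 := by linarith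
  simp only [Function.comp_apply, integral_comp_rpow_inv_Ioi _ hp, smul_eq_mul,
    add_sub_cancel_right, Gamma_add_one hp.ne']
  field_simp [(Gamma_pos_of_pos hp).ne']
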